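/- arXiv:2202.07154 — 2 statements merged into one kernel-verified Lean document; each statement's English description precedes it below -/
import Mathlib

section
/- Let $x \in L_1(0,1)$ with decreasing rearrangement $\mu(x)$, and define $f_1 = \sum_{n=0}^{\infty} (-1)^{n+1} \mu(2^{-n-1}; x)\, h_{n,1}$, where $h_{n,1} = \chi_{(0,2^{-n-1})} - \chi_{(2^{-n-1},2^{-n})}$. Then $|f_1(t)| \le 2\, (\sigma_2 \mu(x))(t)$ for almost every $t \in (0,1)$, where $(\sigma_2 y)(t) = y(t/2)\chi_{[0,1]}(t/2)$ is the dilation operator. -/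
open MeasureTheory Set

noncomputable section

def m01 : Measure ℝ := volume.restrict (Ioo (0:ℝ) 1)

def rearr (x : ℝ → ℝ) (t : ℝ) : ℝ :=
  sInf {s : ℝ | 0 ≤ s ∧ m01 {u | s < |x u|} ≤ ENNReal.ofReal t}

def dil (s : ℝ) (y : ℝ → ℝ) (t : ℝ) : ℝ :=
  if t / s ∈ Icc (0:ℝ) 1 then y (t / s) else 0

def In (n : ℕ) : Set ℝ := Ioo (((2:ℝ)^(n+1))⁻¹) (((2:ℝ)^n)⁻¹)

def Jn (n : ℕ) : Set ℝ := Ioo 0 (((2:ℝ)^n)⁻¹)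

def haarH (n : ℕ) : ℝ → ℝ := fun t => indicator (Jn (n+1)) 1 t - indicator (In n) 1 t

def Eset : Set ℝ := ⋃ j : ℕ, In (2*j)

def hardyC (y : ℝ → ℝ) (t : ℝ) : ℝ := (1/t) * ∫ s in Ioo (0:ℝ) t, y s

def hardyCstar (y : ℝ → ℝ) (t : ℝ) : ℝ := ∫ s in Ioo t 1, y s / s

def calderon (y : ℝ → ℝ) (t : ℝ) : ℝ := hardyC y t + hardyCstar y t

def dyadicSA (m : ℕ) : MeasurableSpace ℝ :=
  MeasurableSpace.generateFrom
    {A | ∃ j : ℕ, 1 ≤ j ∧ j ≤ 2^m ∧ A = Ioo ((j-1 : ℝ)/2^m) ((j:ℝ)/2^m)}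

def condE (m : ℕ) (f : ℝ → ℝ) : ℝ → ℝ := m01[f | dyadicSA m]

def condEprev (m : ℕ) (f : ℝ → ℝ) : ℝ → ℝ := if m = 0 then 0 else condE (m-1) f

def Tmart (f : ℝ → ℝ) : ℝ → ℝ :=
  fun t => ∑' m : ℕ, if Even m then condE m f t - condEprev m f t else 0

def Teps (f : ℝ → ℝ) : ℝ → ℝ :=
  fun t => ∑' m : ℕ, (-1:ℝ)^m * (condE m f t - condEprev m f t)

/-!
Almost every `t ∈ (0,1)` lies in a dyadic interval `In m = (2^{-m-1}, 2^{-m})`, on which `haarH n`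
equals `1` for `n < m`, `-1` for `n = m` and `0` for `n > m`. So `f₁(t)` is a finite alternating
sum of the nondecreasing sequence `a n = μ(2^{-n-1})` plus the term `±a m`. An alternating sum of
the first `m` terms of a nonnegative nondecreasing sequence is bounded by `a m`, whence
`|f₁(t)| ≤ 2 a m`, and `a m ≤ μ(t/2)` because `t/2 < 2^{-m-1}` and `μ` is nonincreasing.
-/

open Filter Topology

lemma tendsto_measure_abs_gt_atTop {α : Type*} [MeasurableSpace α] {μ : Measure α}
    [IsFiniteMeasure μ] {x : α → ℝ} (hx : AEMeasurable x μ) :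
    Tendsto (fun s => μ {u | s < |x u|}) atTop (𝓝 0) := by
  have hInter : (⋂ s : ℝ, {u | s < |x u|}) = ∅ :=
    eq_empty_of_forall_notMem fun u hu => (show |x u| < |x u| from mem_iInter.1 hu _).false
  simpa [Function.comp_def, hInter] using
    tendsto_measure_iInter_atTop (μ := μ) (s := fun s : ℝ => {u | s < |x u|})
      (fun _ => nullMeasurableSet_lt aemeasurable_const hx.abs)
      (fun _ _ h _ hu => h.trans_lt hu) ⟨0, measure_ne_top μ _⟩

instance isFiniteMeasure_m01 : IsFiniteMeasure m01 := isFiniteMeasure_restrict.2 (by simp)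

lemma rearr_nonneg (x : ℝ → ℝ) (t : ℝ) : 0 ≤ rearr x t :=
  Real.sInf_nonneg fun _ hs => hs.1

lemma antitoneOn_rearr {x : ℝ → ℝ} (hx : AEMeasurable x m01) : AntitoneOn (rearr x) (Ioi 0) := by
  intro t ht t' _ htt'
  -- the set whose `sInf` defines `rearr x t` is nonempty, so `sInf` is not the junk value `0`
  obtain ⟨s, hs_lt, hs_nonneg⟩ := (((tendsto_measure_abs_gt_atTop hx).eventually
    (gt_mem_nhds (ENNReal.ofReal_pos.2 ht))).and (eventually_ge_atTop 0)).exists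
  exact csInf_le_csInf ⟨0, fun _ hs => hs.1⟩ ⟨s, hs_nonneg, hs_lt.le⟩
    fun s hs => ⟨hs.1, hs.2.trans (ENNReal.ofReal_le_ofReal htt')⟩

lemma alternating_sum_range_mem_Icc {a : ℕ → ℝ} (ha₀ : 0 ≤ a 0) (ha : Monotone a) (m : ℕ) :
    (-1) ^ m * ∑ n ∈ Finset.range m, (-1) ^ (n + 1) * a n ∈ Icc 0 (a m) := by
  induction m with
  | zero => simpa using ha₀
  | succ m ih =>
    have hstep : (-1 : ℝ) ^ (m + 1) * ∑ n ∈ Finset.range (m + 1), (-1) ^ (n + 1) * a n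
        = a m - (-1) ^ m * ∑ n ∈ Finset.range m, (-1) ^ (n + 1) * a n := by
      rw [Finset.sum_range_succ, mul_add, ← mul_assoc, ← pow_add, Even.neg_one_pow ⟨m + 1, rfl⟩]
      ring
    rw [hstep]
    exact ⟨by linarith [ih.2], by linarith [ih.1, ha m.le_succ]⟩

lemma abs_alternating_sum_range_le {a : ℕ → ℝ} (ha₀ : 0 ≤ a 0) (ha : Monotone a) (m : ℕ) :
    |∑ n ∈ Finset.range m, (-1) ^ (n + 1) * a n| ≤ a m := by
  obtain ⟨h₀, h₁⟩ := alternating_sum_range_mem_Icc ha₀ ha m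
  calc _ = |(-1) ^ m * ∑ n ∈ Finset.range m, (-1) ^ (n + 1) * a n| := by simp [abs_mul]
    _ ≤ a m := (abs_of_nonneg h₀).trans_le h₁

section Dyadic

variable {m n : ℕ} {t : ℝ}

lemma In_subset_Ioo : In m ⊆ Ioo 0 1 := fun _ ht =>
  ⟨(inv_pos.2 (by positivity)).trans ht.1,
    ht.2.trans_le (by simpa using inv_pow_le_inv_pow_of_le (a := (2:ℝ)) one_le_two m.zero_le)⟩

lemma haarH_of_lt (ht : t ∈ In m) (h : n < m) : haarH n t = 1 := by
  have hlt : t < ((2:ℝ) ^ (n + 1))⁻¹ := ht.2.trans_le (inv_pow_le_inv_pow_of_le one_le_two h)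
  have hJ : t ∈ Jn (n + 1) := ⟨(In_subset_Ioo ht).1, hlt⟩
  have hI : t ∉ In n := fun hI => hlt.not_gt hI.1
  simp [haarH, hJ, hI]

lemma haarH_self (ht : t ∈ In m) : haarH m t = -1 := by
  have hJ : t ∉ Jn (m + 1) := fun hJ => hJ.2.not_gt ht.1
  simp [haarH, hJ, ht]

lemma haarH_of_gt (ht : t ∈ In m) (h : m < n) : haarH n t = 0 := by
  have hle : ((2:ℝ) ^ n)⁻¹ ≤ ((2:ℝ) ^ (m + 1))⁻¹ := inv_pow_le_inv_pow_of_le one_le_two h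
  have hJ : t ∉ Jn (n + 1) := fun hJ =>
    (hJ.2.trans_le ((inv_pow_le_inv_pow_of_le one_le_two n.le_succ).trans hle)).not_gt ht.1
  have hI : t ∉ In n := fun hI => (hI.2.trans_le hle).not_gt ht.1
  simp [haarH, hJ, hI]

lemma tsum_mul_haarH_of_mem_In (c : ℕ → ℝ) (ht : t ∈ In m) :
    ∑' n, c n * haarH n t = ∑ n ∈ Finset.range m, c n - c m := by
  rw [tsum_eq_sum (s := Finset.range (m + 1)) fun n hn => by
      rw [haarH_of_gt ht (by simpa using hn), mul_zero],
    Finset.sum_range_succ, haarH_self ht, Finset.sum_congr rfl fun n hn => by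
      rw [haarH_of_lt ht (Finset.mem_range.1 hn)]]
  simp [sub_eq_add_neg]

lemma ae_exists_mem_In : ∀ᵐ t ∂m01, ∃ m, t ∈ In m := by
  filter_upwards [ae_restrict_mem measurableSet_Ioo,
    (countable_range fun k : ℕ => ((2:ℝ) ^ k)⁻¹).ae_notMem (volume.restrict (Ioo (0:ℝ) 1))]
    with t ht hnot
  obtain ⟨m, hlt, hle⟩ :=
    exists_nat_pow_near_of_lt_one ht.1 ht.2.le (by norm_num : (0:ℝ) < 2⁻¹) (by norm_num)
  rw [inv_pow] at hlt hle
  exact ⟨m, hlt, hle.lt_of_ne fun h => hnot ⟨m, h.symm⟩⟩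

end Dyadic

theorem f1_pointwise_bound (x : ℝ → ℝ) (hx : Integrable x m01) :
    ∀ᵐ t ∂m01,
      |∑' n : ℕ, (-1:ℝ)^(n+1) * rearr x (((2:ℝ)^(n+1))⁻¹) * haarH n t|
        ≤ 2 * dil 2 (rearr x) t := by
  filter_upwards [ae_exists_mem_In] with t ⟨m, ht⟩
  set a : ℕ → ℝ := fun n => rearr x ((2 ^ (n + 1))⁻¹)
  have ha : Monotone a := fun _ _ h => antitoneOn_rearr hx.aemeasurable (by simp) (by simp)
    (inv_pow_le_inv_pow_of_le one_le_two (by omega))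
  have ham : a m ≤ rearr x (t / 2) := by
    refine antitoneOn_rearr hx.aemeasurable (by simpa using (In_subset_Ioo ht).1) (by simp) ?_
    rw [pow_succ, mul_inv, ← div_eq_mul_inv]
    linarith [ht.2]
  have hdil : dil 2 (rearr x) t = rearr x (t / 2) :=
    if_pos ⟨by linarith [(In_subset_Ioo ht).1], by linarith [(In_subset_Ioo ht).2]⟩
  rw [tsum_mul_haarH_of_mem_In _ ht, hdil]
  calc _ ≤ |∑ n ∈ Finset.range m, (-1) ^ (n + 1) * a n| + |(-1) ^ (m + 1) * a m| := abs_sub _ _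
    _ ≤ a m + a m := by
        gcongr
        · exact abs_alternating_sum_range_le (rearr_nonneg _ _) ha m
        · simpa using (abs_of_nonneg (rearr_nonneg x _)).le
    _ ≤ 2 * rearr x (t / 2) := by linarith
end
end

section
/- Let $T f = \sum_{m \ge 0,\, m \text{ even}} (\mathbb{E}_m f - \mathbb{E}_{m-1} f)$ (with $\mathbb{E}_{-1}=0$) and $E = \bigcup_{j \ge 0} (2^{-2j-1}, 2^{-2j})$. Then for every even $n \ge 0$, $(T\chi_{I_n}) \cdot \chi_E \ge \frac{1}{3} g_n \chi_E$ almost everywhere, where $I_n = (2^{-n-1},2^{-n})$ and $g_n = \sum_{k=0}^{\infty} 2^{-(n-k)_+} \chi_{I_k}$. -/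
open MeasureTheory Set

noncomputable section

/-!
On `I_k` the conditional expectations of `χ_{I_n}` are explicit: for `m ≤ n` the dyadic atom of
level `m` containing `I_n` is `J_m`, so `𝔼_m χ_{I_n} = 2^(m-n-1) χ_{J_m}`; for `m > n` the set `I_n`
is a union of atoms up to a null set, so `𝔼_m χ_{I_n} = χ_{I_n}`. Hence, for `k` and `n` both even,
the even-indexed martingale differences at a point of `I_k` are `2^(-n-1)` at `m = 0` and
`2^(m-n-2)` for `0 < m ≤ min k n`, and vanish beyond: parity of `k` and `n` guarantees that no
counted difference straddles `min k n` or `n`. The geometric sum is `(4^(q+1) + 2) / (3 · 2^(n+2))`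
with `2q = min k n`, which is at least `2^(-(n-k)₊) / 3`.
-/

instance : IsFiniteMeasure m01 := Real.isFiniteMeasure_restrict_Ioo 0 1

def dyadicGen (m : ℕ) : Set (Set ℝ) :=
  {A | ∃ j : ℕ, 1 ≤ j ∧ j ≤ 2^m ∧ A = Ioo ((j-1 : ℝ)/2^m) ((j:ℝ)/2^m)}

lemma dyadicSA_eq_generateFrom (m : ℕ) :
    dyadicSA m = MeasurableSpace.generateFrom (dyadicGen m) := rfl

lemma dyadicSA_le (m : ℕ) : dyadicSA m ≤ Real.measurableSpace :=
  MeasurableSpace.generateFrom_le <| by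
    rintro A ⟨j, -, -, rfl⟩
    exact measurableSet_Ioo

lemma measurableSet_of_mem_dyadicGen {m : ℕ} {A : Set ℝ} (hA : A ∈ dyadicGen m) :
    MeasurableSet A :=
  dyadicSA_le m A (MeasurableSpace.measurableSet_generateFrom hA)

lemma subset_Ioo_of_mem_dyadicGen {m : ℕ} {A : Set ℝ} (hA : A ∈ dyadicGen m) :
    A ⊆ Ioo 0 1 := by
  obtain ⟨j, hj1, hj2, rfl⟩ := hA
  have h2m : (0:ℝ) < 2^m := by positivity
  have hj1' : (1:ℝ) ≤ j := by exact_mod_cast hj1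
  have hj2' : (j:ℝ) ≤ 2^m := by exact_mod_cast hj2
  refine Ioo_subset_Ioo ?_ ?_
  · positivity
  · rwa [div_le_one h2m]

lemma dyadicGen_eq_or_disjoint {m : ℕ} {A B : Set ℝ} (hA : A ∈ dyadicGen m)
    (hB : B ∈ dyadicGen m) : A = B ∨ Disjoint A B := by
  obtain ⟨j, -, -, rfl⟩ := hA
  obtain ⟨l, -, -, rfl⟩ := hB
  have key : ∀ j l : ℕ, j < l →
      Disjoint (Ioo ((j-1 : ℝ)/2^m) ((j:ℝ)/2^m)) (Ioo ((l-1 : ℝ)/2^m) ((l:ℝ)/2^m)) := by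
    intro j l hjl
    have hjl' : (j:ℝ) ≤ l - 1 := by
      have : (j:ℝ) + 1 ≤ l := by exact_mod_cast hjl
      linarith
    refine Ioo_disjoint_Ioo.2 (le_trans (min_le_left _ _) (le_trans ?_ (le_max_right _ _)))
    gcongr
  rcases lt_trichotomy j l with h | rfl | h
  · exact .inr (key j l h)
  · exact .inl rfl
  · exact .inr (key l j h).symm

lemma isPiSystem_dyadicGen (m : ℕ) : IsPiSystem (dyadicGen m) := by
  intro A hA B hB hne
  rcases dyadicGen_eq_or_disjoint hA hB with rfl | hdisj
  · rwa [inter_self]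
  · exact absurd hdisj.inter_eq hne.ne_empty

lemma ae_eq_condE_of_setIntegral_eq_on_dyadicGen {m : ℕ} {f g : ℝ → ℝ}
    (hf : Integrable f m01) (hg : Integrable g m01) (hgm : StronglyMeasurable[dyadicSA m] g)
    (hgen : ∀ A ∈ dyadicGen m, ∫ x in A, g x ∂m01 = ∫ x in A, f x ∂m01)
    (huniv : ∫ x, g x ∂m01 = ∫ x, f x ∂m01) :
    g =ᵐ[m01] condE m f := by
  refine ae_eq_condExp_of_forall_setIntegral_eq (dyadicSA_le m) hf
    (fun _ _ _ => hg.integrableOn) (fun s hs _ => ?_) hgm.aestronglyMeasurable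
  clear ‹m01 s < ⊤›
  induction s, hs using MeasurableSpace.induction_on_inter (dyadicSA_eq_generateFrom m)
    (isPiSystem_dyadicGen m) with
  | empty => simp
  | basic A hA => exact hgen A hA
  | compl A hA ih =>
    have hA' := dyadicSA_le m A hA
    have hg' := integral_add_compl hA' hg
    have hf' := integral_add_compl hA' hf
    linarith
  | iUnion A hdisj hA ih =>
    have hA' i := dyadicSA_le m _ (hA i)
    rw [integral_iUnion hA' hdisj hg.integrableOn, integral_iUnion hA' hdisj hf.integrableOn]
    exact tsum_congr ih

lemma setIntegral_indicator_const_m01 {A B : Set ℝ} (hA : MeasurableSet A)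
    (hB : MeasurableSet B) (hB1 : B ⊆ Ioo 0 1) (c : ℝ) :
    ∫ x in A, B.indicator (fun _ => c) x ∂m01 = volume.real (B ∩ A) * c := by
  rw [m01, Measure.restrict_restrict hA, integral_indicator_const c hB,
    measureReal_restrict_apply hB, smul_eq_mul, ← inter_assoc,
    inter_eq_left.2 (inter_subset_left.trans hB1)]

lemma condE_indicator_ae_eq_of_subset_dyadicGen {m : ℕ} {S D : Set ℝ} (hS : MeasurableSet S)
    (hD : D ∈ dyadicGen m) (hSD : S ⊆ D) :
    D.indicator (fun _ => volume.real S / volume.real D) =ᵐ[m01] condE m (S.indicator 1) := by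
  have hDm := measurableSet_of_mem_dyadicGen hD
  have hD1 := subset_Ioo_of_mem_dyadicGen hD
  have hDpos : volume.real D ≠ 0 := by
    obtain ⟨j, -, -, rfl⟩ := hD
    rw [Real.volume_real_Ioo_of_le (by gcongr; linarith)]
    field_simp
    norm_num
  have hint : ∀ A, MeasurableSet A → D ⊆ A ∨ Disjoint D A →
      ∫ x in A, D.indicator (fun _ => volume.real S / volume.real D) x ∂m01
        = ∫ x in A, S.indicator (fun _ => (1:ℝ)) x ∂m01 := by
    intro A hA hDA
    rw [setIntegral_indicator_const_m01 hA hDm hD1, setIntegral_indicator_const_m01 hA hS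
      (hSD.trans hD1)]
    rcases hDA with hDA | hDA
    · rw [inter_eq_left.2 hDA, inter_eq_left.2 (hSD.trans hDA)]
      field_simp
    · rw [hDA.inter_eq, (hDA.mono_left hSD).inter_eq]
      simp
  refine ae_eq_condE_of_setIntegral_eq_on_dyadicGen ((integrable_const _).indicator hS)
    ((integrable_const _).indicator hDm)
    (stronglyMeasurable_const.indicator (MeasurableSpace.measurableSet_generateFrom hD))
    (fun A hA => hint A (measurableSet_of_mem_dyadicGen hA) ?_) ?_
  · rcases dyadicGen_eq_or_disjoint hD hA with rfl | h
    exacts [.inl subset_rfl, .inr h]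
  · have h := hint univ MeasurableSet.univ (.inl (subset_univ D))
    rw [setIntegral_univ, setIntegral_univ] at h
    exact h

lemma exists_dyadicSA_ae_eq_Ioo (m : ℕ) {a b : ℕ} (hab : a ≤ b) (hb : b ≤ 2^m) :
    ∃ U, MeasurableSet[dyadicSA m] U ∧ Ioo ((a:ℝ)/2^m) ((b:ℝ)/2^m) =ᵐ[volume] U := by
  induction b, hab using Nat.le_induction with
  | base => exact ⟨∅, (dyadicSA m).measurableSet_empty, by simp⟩
  | succ b hab ih =>
    obtain ⟨U, hU, hUae⟩ := ih (by omega)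
    have hgen : Ioo ((b:ℝ)/2^m) (((b+1:ℕ):ℝ)/2^m) ∈ dyadicGen m :=
      ⟨b+1, by omega, hb, by push_cast; rw [add_sub_cancel_right]⟩
    refine ⟨U ∪ Ioo ((b:ℝ)/2^m) (((b+1:ℕ):ℝ)/2^m),
      hU.union (MeasurableSpace.measurableSet_generateFrom hgen), ?_⟩
    have h1 : (a:ℝ)/2^m ≤ b/2^m := by gcongr
    have h2 : (b:ℝ)/2^m ≤ ((b+1:ℕ):ℝ)/2^m := by gcongr; omega
    refine Ioo_ae_eq_Ioc.trans ?_
    rw [← Ioc_union_Ioc_eq_Ioc h1 h2]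
    exact (Ioo_ae_eq_Ioc.symm.union Ioo_ae_eq_Ioc.symm).trans
      (hUae.union Filter.EventuallyEq.rfl)

lemma mem_Jn_iff_of_mem_In {k m : ℕ} {t : ℝ} (ht : t ∈ In k) : t ∈ Jn m ↔ m ≤ k := by
  constructor
  · intro htm
    by_contra! hkm
    have : ((2:ℝ)^m)⁻¹ ≤ ((2:ℝ)^(k+1))⁻¹ :=
      inv_anti₀ (by positivity) (pow_le_pow_right₀ one_le_two hkm)
    linarith [htm.2, ht.1]
  · intro hmk
    refine ⟨lt_trans (by positivity) ht.1, ht.2.trans_le ?_⟩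
    gcongr
    norm_num

lemma In_subset_Jn {m n : ℕ} (h : m ≤ n) : In n ⊆ Jn m :=
  fun _ ht => (mem_Jn_iff_of_mem_In ht).2 h

lemma eq_of_mem_In_of_mem_In {k l : ℕ} {t : ℝ} (hk : t ∈ In k) (hl : t ∈ In l) : k = l :=
  le_antisymm ((mem_Jn_iff_of_mem_In hl).1 (In_subset_Jn le_rfl hk))
    ((mem_Jn_iff_of_mem_In hk).1 (In_subset_Jn le_rfl hl))

lemma tsum_mul_indicator_In (w : ℕ → ℝ) {l : ℕ} {t : ℝ} (ht : t ∈ In l) :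
    ∑' k, w k * (In k).indicator 1 t = w l := by
  rw [tsum_eq_single l fun k hk => by
      rw [indicator_of_notMem fun htk => hk (eq_of_mem_In_of_mem_In htk ht), mul_zero],
    indicator_of_mem ht, Pi.one_apply, mul_one]

lemma Jn_mem_dyadicGen (m : ℕ) : Jn m ∈ dyadicGen m :=
  ⟨1, le_rfl, Nat.one_le_two_pow, by simp [Jn]⟩

lemma inv_two_pow_eq_natCast_div {k m : ℕ} (h : k ≤ m) :
    ((2:ℝ)^k)⁻¹ = ((2^(m-k) : ℕ) : ℝ) / 2^m := by
  rw [Nat.cast_pow, Nat.cast_ofNat, pow_sub₀ _ two_ne_zero h]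
  field_simp

lemma condE_indicator_In_of_le {n m : ℕ} (h : m ≤ n) :
    condE m ((In n).indicator 1) =ᵐ[m01] (Jn m).indicator (fun _ => (2:ℝ)^m / 2^(n+1)) := by
  have hvol : volume.real (In n) / volume.real (Jn m) = (2:ℝ)^m / 2^(n+1) := by
    rw [In, Jn, Real.volume_real_Ioo_of_le (by gcongr <;> norm_num),
      Real.volume_real_Ioo_of_le (by positivity)]
    field_simp
    ring
  rw [← hvol]
  exact (condE_indicator_ae_eq_of_subset_dyadicGen measurableSet_Ioo (Jn_mem_dyadicGen m)
    (In_subset_Jn h)).symm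

lemma condE_indicator_In_of_lt {n m : ℕ} (h : n < m) :
    condE m ((In n).indicator 1) =ᵐ[m01] (In n).indicator 1 := by
  have hIn : In n = Ioo (((2^(m-(n+1)) : ℕ) : ℝ)/2^m) (((2^(m-n) : ℕ) : ℝ)/2^m) := by
    rw [In, inv_two_pow_eq_natCast_div h, inv_two_pow_eq_natCast_div h.le]
  obtain ⟨U, hU, hae⟩ := exists_dyadicSA_ae_eq_Ioo m (a := 2^(m-(n+1))) (b := 2^(m-n))
    (Nat.pow_le_pow_right two_pos (by omega)) (Nat.pow_le_pow_right two_pos (by omega))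
  refine condExp_of_aestronglyMeasurable' (dyadicSA_le m)
    ⟨U.indicator 1, stronglyMeasurable_one.indicator hU, ?_⟩
    ((integrable_const 1).indicator measurableSet_Ioo)
  rw [hIn]
  exact ae_restrict_of_ae (indicator_ae_eq_of_ae_eq_set hae)

def condEIndicatorIn (n m : ℕ) (t : ℝ) : ℝ :=
  if m ≤ n then (Jn m).indicator (fun _ => (2:ℝ)^m / 2^(n+1)) t else (In n).indicator 1 t

lemma ae_condE_indicator_In_eq (n : ℕ) :
    ∀ᵐ t ∂m01, ∀ m, condE m ((In n).indicator 1) t = condEIndicatorIn n m t := by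
  refine ae_all_iff.2 fun m => ?_
  by_cases h : m ≤ n
  · filter_upwards [condE_indicator_In_of_le h] with t ht
    rw [condEIndicatorIn, if_pos h, ht]
  · filter_upwards [condE_indicator_In_of_lt (not_le.1 h)] with t ht
    rw [condEIndicatorIn, if_neg h, ht]

def evenIncrementSum (e : ℕ → ℝ) : ℝ :=
  ∑' m : ℕ, if Even m then e m - (if m = 0 then 0 else e (m - 1)) else 0

lemma Tmart_apply (f : ℝ → ℝ) (t : ℝ) :
    Tmart f t = evenIncrementSum (fun m => condE m f t) := by
  refine tsum_congr fun m => ?_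
  by_cases hm : m = 0 <;> simp [condEprev, hm]

lemma evenIncrementSum_eq {e : ℕ → ℝ} {a : ℝ} {q : ℕ} (hgeom : ∀ m ≤ 2*q, e m = a * 2^m)
    (hflat : ∀ j, q < j → e (2*j) = e (2*j-1)) :
    evenIncrementSum e = a * (4^(q+1) + 2) / 6 := by
  set d : ℕ → ℝ := fun m => if Even m then e m - (if m = 0 then 0 else e (m - 1)) else 0
    with hd
  have hodd : HasSum (fun j => d (2*j+1)) 0 := by
    simp [hd]
  have hsupp : ∀ j ∉ Finset.range (q+1), d (2*j) = 0 := by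
    intro j hj
    rw [Finset.mem_range, not_lt] at hj
    simp [hd, hflat j (by omega), show 2*j ≠ 0 by omega]
  have hpartial : ∀ r ≤ q, ∑ j ∈ Finset.range (r+1), d (2*j) = a * (4^(r+1) + 2) / 6 := by
    intro r hr
    induction r with
    | zero =>
      rw [zero_add, Finset.sum_range_one]
      simp only [hd, mul_zero, Even.zero, if_true, sub_zero, hgeom 0 (Nat.zero_le _)]
      ring
    | succ r ih =>
      rw [Finset.sum_range_succ, ih (by omega)]
      simp only [hd, even_two_mul, if_true, show 2*(r+1) ≠ 0 by omega, if_false,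
        show 2*(r+1)-1 = 2*r+1 by omega, hgeom (2*(r+1)) (by omega), hgeom (2*r+1) (by omega)]
      rw [show (4:ℝ) = 2^2 by norm_num, ← pow_mul, ← pow_mul]
      ring
  have hsum := (hasSum_sum_of_ne_finset_zero hsupp).even_add_odd hodd
  rw [hpartial q le_rfl, add_zero] at hsum
  exact hsum.tsum_eq

lemma evenIncrementSum_condEIndicatorIn {p i : ℕ} {t : ℝ} (ht : t ∈ In (2*i)) :
    evenIncrementSum (condEIndicatorIn (2*p) · t)
      = 1/2^(2*p+1) * (4^(min i p + 1) + 2) / 6 := by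
  refine evenIncrementSum_eq (fun m hm => ?_) (fun j hj => ?_)
  · rw [condEIndicatorIn, if_pos (by omega),
      indicator_of_mem ((mem_Jn_iff_of_mem_In ht).2 (by omega))]
    ring
  · by_cases hjp : j ≤ p
    · rw [condEIndicatorIn, condEIndicatorIn, if_pos (by omega), if_pos (by omega),
        indicator_of_notMem (mt (mem_Jn_iff_of_mem_In ht).1 (by omega)),
        indicator_of_notMem (mt (mem_Jn_iff_of_mem_In ht).1 (by omega))]
    · rw [condEIndicatorIn, condEIndicatorIn, if_neg (by omega), if_neg (by omega)]

lemma one_third_two_zpow_le (p i : ℕ) :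
    1/3 * (2:ℝ)^(-(max (((2*p : ℕ) : ℤ) - ((2*i : ℕ) : ℤ)) 0))
      ≤ 1/2^(2*p+1) * (4^(min i p + 1) + 2) / 6 := by
  set q := min i p with hq
  clear_value q
  obtain ⟨d, hp⟩ : ∃ d, p = q + d := ⟨p - q, by omega⟩
  rw [show max (((2*p : ℕ) : ℤ) - ((2*i : ℕ) : ℤ)) 0 = ((2*d : ℕ) : ℤ) by omega,
    zpow_neg, zpow_natCast, hp]
  rw [show (2:ℝ)^(2*(q+d)+1) = 2 * 4^q * 4^d by
      rw [pow_succ, pow_mul, pow_add]; norm_num; ring,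
    show (2:ℝ)^(2*d) = 4^d by rw [pow_mul]; norm_num]
  have h4q : (0:ℝ) < 4^q := by positivity
  have h4d : (0:ℝ) < 4^d := by positivity
  field_simp
  rw [pow_succ]
  linarith

theorem Tmart_indicator_lower_bound (n : ℕ) (hn : Even n) :
    ∀ᵐ t ∂m01,
      (1/3) * (∑' k : ℕ, (2:ℝ)^(-(max ((n:ℤ) - (k:ℤ)) 0)) * indicator (In k) 1 t)
          * indicator Eset 1 t
        ≤ Tmart (indicator (In n) 1) t * indicator Eset 1 t := by
  obtain ⟨p, rfl⟩ := hn.two_dvd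
  filter_upwards [ae_condE_indicator_In_eq (2*p)] with t hcond
  by_cases htE : t ∈ Eset
  · obtain ⟨i, hti⟩ := mem_iUnion.1 htE
    rw [indicator_of_mem htE, Pi.one_apply, mul_one, mul_one, tsum_mul_indicator_In _ hti,
      Tmart_apply, funext hcond, evenIncrementSum_condEIndicatorIn hti]
    exact one_third_two_zpow_le p i
  · simp [indicator_of_notMem htE]
end
end
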